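/- If γ > D*, then [0,E₁(γ)] × [0,E₂(γ)] ⊆ R_FD; equivalently, there exists λ ∈ [0,1] such that E₁(γ) ≤ D(P^(λ)‖P₁) and E₂(γ) ≤ D(P^(λ)‖P₂). -/

import Mathlib

open Real Filter Finset MeasureTheory
open scoped Classical

variable {𝒳 : Type*} [Fintype 𝒳] [DecidableEq 𝒳] [Nonempty 𝒳]

/-- Kullback–Leibler divergence `D(Q‖P)` between pmfs on a finite alphabet. -/
noncomputable def kl (Q P : 𝒳 → ℝ) : ℝ :=
  ∑ x, Q x * Real.log (Q x / P x)

/-- The `λ`-tilted distribution `P^(λ)` of `P₁` and `P₂`. -/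
noncomputable def tilt (P₁ P₂ : 𝒳 → ℝ) (l : ℝ) : 𝒳 → ℝ :=
  fun x => P₁ x ^ (1 - l) * P₂ x ^ l / ∑ a, P₁ a ^ (1 - l) * P₂ a ^ l

/-- Probability of a set of length-`N` sample paths under i.i.d. sampling from `P`. -/
noncomputable def prodProb (P : 𝒳 → ℝ) {N : ℕ} (S : Set (Fin N → 𝒳)) : ℝ :=
  ∑ ω : Fin N → 𝒳, S.indicator (fun ω' => ∏ i, P (ω' i)) ω

/-- The fixed-length error-exponent region `R_FD`. -/
def RFD (P₁ P₂ : 𝒳 → ℝ) : Set (ℝ × ℝ) :=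
  {p | 0 ≤ p.1 ∧ 0 ≤ p.2 ∧
    ∃ l ∈ Set.Icc (0:ℝ) 1,
      p.1 ≤ kl (tilt P₁ P₂ l) P₁ ∧ p.2 ≤ kl (tilt P₁ P₂ l) P₂}

/-- `E₁(γ) = max{D(P^(λ)‖P₁) : λ ∈ [0,1], D(P^(λ)‖P₂) ≥ γ}` (sup of the empty set is 0). -/
noncomputable def E1exp (P₁ P₂ : 𝒳 → ℝ) (γ : ℝ) : ℝ :=
  sSup {E | ∃ l ∈ Set.Icc (0:ℝ) 1, γ ≤ kl (tilt P₁ P₂ l) P₂ ∧ E = kl (tilt P₁ P₂ l) P₁}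

/-- `E₂(γ) = max{D(P^(λ)‖P₂) : λ ∈ [0,1], D(P^(λ)‖P₁) ≥ γ}` (sup of the empty set is 0). -/
noncomputable def E2exp (P₁ P₂ : 𝒳 → ℝ) (γ : ℝ) : ℝ :=
  sSup {E | ∃ l ∈ Set.Icc (0:ℝ) 1, γ ≤ kl (tilt P₁ P₂ l) P₁ ∧ E = kl (tilt P₁ P₂ l) P₂}

/-- A sequential hypothesis test whose stopping time is bounded by `N`:
a stopping time `τ` for the coordinate filtration, together with decision events
`A1`, `A2` that are determined by the samples observed up to time `τ`,
are disjoint, and exhaust the sample space. -/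
structure HypTest (𝒳 : Type*) (N : ℕ) where
  τ : (Fin N → 𝒳) → ℕ
  A1 : Set (Fin N → 𝒳)
  A2 : Set (Fin N → 𝒳)
  tau_le : ∀ ω, τ ω ≤ N
  stopping : ∀ ω ω', (∀ i : Fin N, (i : ℕ) < τ ω → ω i = ω' i) → τ ω' = τ ω
  adapted1 : ∀ ω ω', (∀ i : Fin N, (i : ℕ) < τ ω → ω i = ω' i) → (ω ∈ A1 ↔ ω' ∈ A1)
  adapted2 : ∀ ω ω', (∀ i : Fin N, (i : ℕ) < τ ω → ω i = ω' i) → (ω ∈ A2 ↔ ω' ∈ A2)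
  disj : Disjoint A1 A2
  exhaust : A1 ∪ A2 = Set.univ

/-- `(E₁, E₂)` is achievable by `γ`-almost-fixed-length tests. -/
def AFLAchievable (P₁ P₂ : 𝒳 → ℝ) (γ E₁ E₂ : ℝ) : Prop :=
  0 ≤ E₁ ∧ 0 ≤ E₂ ∧
  ∃ c : ℝ, 0 < c ∧ ∃ l : ℕ, 0 < l ∧
    ∀ δ : ℝ, 0 < δ → ∃ n₀ : ℕ, ∀ n : ℕ, n₀ ≤ n →
      ∃ N : ℕ, (N : ℝ) ≤ c * (n : ℝ) ^ l ∧
        ∃ T : HypTest 𝒳 N,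
          prodProb P₁ {ω | n < T.τ ω} ≤ Real.exp (-(γ * n)) ∧
          prodProb P₂ {ω | n < T.τ ω} ≤ Real.exp (-(γ * n)) ∧
          prodProb P₁ T.A2 ≤ Real.exp (-((E₁ - δ) * n)) ∧
          prodProb P₂ T.A1 ≤ Real.exp (-((E₂ - δ) * n))

/-- `(E₁, E₂, E_Ω)` is achievable by fixed-length tests with a rejection option. -/
def RejAchievable (P₁ P₂ : 𝒳 → ℝ) (E₁ E₂ EΩ : ℝ) : Prop :=
  0 ≤ E₁ ∧ 0 ≤ E₂ ∧ 0 ≤ EΩ ∧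
  ∀ δ : ℝ, 0 < δ → ∃ n₀ : ℕ, ∀ n : ℕ, n₀ ≤ n →
    ∃ A1 A2 AΩ : Set (Fin n → 𝒳),
      Disjoint A1 A2 ∧ Disjoint A1 AΩ ∧ Disjoint A2 AΩ ∧ A1 ∪ A2 ∪ AΩ = Set.univ ∧
      prodProb P₁ A2 ≤ Real.exp (-((E₁ - δ) * n)) ∧
      prodProb P₂ A1 ≤ Real.exp (-((E₂ - δ) * n)) ∧
      prodProb P₁ AΩ + prodProb P₂ AΩ ≤ Real.exp (-((EΩ - δ) * n))

/-- Sum of the log-likelihood ratios of the first `n` samples. -/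
noncomputable def S1 (P₁ P₂ : 𝒳 → ℝ) (n : ℕ) {N : ℕ} (ω : Fin N → 𝒳) : ℝ :=
  ∑ i ∈ Finset.univ.filter (fun i : Fin N => (i : ℕ) < n),
    Real.log (P₁ (ω i) / P₂ (ω i))

/-- Sum of the log-likelihood ratios of the samples after time `n`. -/
noncomputable def S2 (P₁ P₂ : 𝒳 → ℝ) (n : ℕ) {N : ℕ} (ω : Fin N → 𝒳) : ℝ :=
  ∑ i ∈ Finset.univ.filter (fun i : Fin N => n ≤ (i : ℕ)),
    Real.log (P₁ (ω i) / P₂ (ω i))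

/-- Event that the two-phase test (phase-one thresholds `α₁ > β₁`, phase-two threshold `α`)
chooses `H₁`. -/
def twoPhaseA1 (P₁ P₂ : 𝒳 → ℝ) (k n : ℕ) (α₁ β₁ α : ℝ) : Set (Fin ((k + 1) * n) → 𝒳) :=
  {ω | α₁ ≤ S1 P₁ P₂ n ω / n ∨
    (β₁ < S1 P₁ P₂ n ω / n ∧ S1 P₁ P₂ n ω / n < α₁ ∧ α ≤ S2 P₁ P₂ n ω / (k * n))}

/-- Event that the two-phase test chooses `H₂`. -/
def twoPhaseA2 (P₁ P₂ : 𝒳 → ℝ) (k n : ℕ) (α₁ β₁ α : ℝ) : Set (Fin ((k + 1) * n) → 𝒳) :=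
  {ω | S1 P₁ P₂ n ω / n ≤ β₁ ∨
    (β₁ < S1 P₁ P₂ n ω / n ∧ S1 P₁ P₂ n ω / n < α₁ ∧ S2 P₁ P₂ n ω / (k * n) < α)}

/-- Stopping time of the two-phase test: `n` if phase one is decisive, `(k+1)n` otherwise. -/
noncomputable def twoPhaseTau (P₁ P₂ : 𝒳 → ℝ) (k n : ℕ) (α₁ β₁ : ℝ)
    (ω : Fin ((k + 1) * n) → 𝒳) : ℕ :=
  if β₁ < S1 P₁ P₂ n ω / n ∧ S1 P₁ P₂ n ω / n < α₁ then (k + 1) * n else n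

/-!
Write `Z_μ = ∑ₐ P₁(a)^{1-μ} P₂(a)^μ`. For every distribution `Q`,
`(1-μ) D(Q‖P₁) + μ D(Q‖P₂) = D(Q‖P^(μ)) - log Z_μ`, so by Gibbs' inequality the tilted
distribution `P^(μ)` minimises `(1-μ) D(·‖P₁) + μ D(·‖P₂)`. Comparing it with `Q = P^(λ*)`, whose two
divergences both equal `D* < γ`, shows that `D(P^(μ)‖P₂) ≥ γ` forces `D(P^(μ)‖P₁) ≤ D*`; hence
`E₁(γ) ≤ D*`, symmetrically `E₂(γ) ≤ D*`, and `λ*` is a witness for the whole box.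
-/

section Tilt

variable {P₁ P₂ : 𝒳 → ℝ}

lemma tilt_normalizer_pos (h1 : ∀ x, 0 < P₁ x) (h2 : ∀ x, 0 < P₂ x) (l : ℝ) :
    0 < ∑ a, P₁ a ^ (1 - l) * P₂ a ^ l :=
  Finset.sum_pos (fun a _ => mul_pos (rpow_pos_of_pos (h1 a) _) (rpow_pos_of_pos (h2 a) _))
    Finset.univ_nonempty

lemma tilt_pos (h1 : ∀ x, 0 < P₁ x) (h2 : ∀ x, 0 < P₂ x) (l : ℝ) (x : 𝒳) :
    0 < tilt P₁ P₂ l x :=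
  div_pos (mul_pos (rpow_pos_of_pos (h1 x) _) (rpow_pos_of_pos (h2 x) _))
    (tilt_normalizer_pos h1 h2 l)

lemma sum_tilt (h1 : ∀ x, 0 < P₁ x) (h2 : ∀ x, 0 < P₂ x) (l : ℝ) :
    ∑ x, tilt P₁ P₂ l x = 1 := by
  simp only [tilt]
  rw [← Finset.sum_div, div_self (tilt_normalizer_pos h1 h2 l).ne']

lemma tilt_swap (P₁ P₂ : 𝒳 → ℝ) (l : ℝ) : tilt P₂ P₁ (1 - l) = tilt P₁ P₂ l := by
  ext x
  simp only [tilt, sub_sub_cancel, mul_comm (P₂ _ ^ l)]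

end Tilt

section KL

variable {Q P : 𝒳 → ℝ}

lemma sum_sub_sum_le_kl (hQ : ∀ x, 0 < Q x) (hP : ∀ x, 0 < P x) :
    ∑ x, Q x - ∑ x, P x ≤ kl Q P := by
  rw [← Finset.sum_sub_distrib]
  refine Finset.sum_le_sum fun x _ => ?_
  have hlog := one_sub_inv_le_log_of_pos (div_pos (hQ x) (hP x))
  calc Q x - P x = Q x * (1 - (Q x / P x)⁻¹) := by field_simp [(hQ x).ne']
    _ ≤ Q x * log (Q x / P x) := mul_le_mul_of_nonneg_left hlog (hQ x).le

lemma kl_nonneg (hQ : ∀ x, 0 < Q x) (hP : ∀ x, 0 < P x) (hsum : ∑ x, P x ≤ ∑ x, Q x) :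
    0 ≤ kl Q P :=
  (sub_nonneg.mpr hsum).trans (sum_sub_sum_le_kl hQ hP)

lemma kl_self (Q : 𝒳 → ℝ) : kl Q Q = 0 :=
  Finset.sum_eq_zero fun x _ => by
    rcases eq_or_ne (Q x) 0 with hx | hx
    · simp [hx]
    · rw [div_self hx, log_one, mul_zero]

lemma kl_tilt {P₁ P₂ : 𝒳 → ℝ} (h1 : ∀ x, 0 < P₁ x) (h2 : ∀ x, 0 < P₂ x)
    (hQ : ∀ x, 0 < Q x) (hQs : ∑ x, Q x = 1) (l : ℝ) :
    kl Q (tilt P₁ P₂ l) =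
      (1 - l) * kl Q P₁ + l * kl Q P₂ + log (∑ a, P₁ a ^ (1 - l) * P₂ a ^ l) := by
  set Z := ∑ a, P₁ a ^ (1 - l) * P₂ a ^ l
  have hZ : 0 < Z := tilt_normalizer_pos h1 h2 l
  have hterm : ∀ x, Q x * log (Q x / tilt P₁ P₂ l x) =
      (1 - l) * (Q x * log (Q x / P₁ x)) + l * (Q x * log (Q x / P₂ x)) + Q x * log Z := by
    intro x
    have hw1 : 0 < P₁ x ^ (1 - l) := rpow_pos_of_pos (h1 x) _
    have hw2 : 0 < P₂ x ^ l := rpow_pos_of_pos (h2 x) _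
    have hlog : log (Q x / tilt P₁ P₂ l x) =
        log (Q x) - ((1 - l) * log (P₁ x) + l * log (P₂ x)) + log Z := by
      rw [tilt, div_div_eq_mul_div, log_div (mul_pos (hQ x) hZ).ne' (mul_pos hw1 hw2).ne',
        log_mul (hQ x).ne' hZ.ne', log_mul hw1.ne' hw2.ne', log_rpow (h1 x), log_rpow (h2 x)]
      ring
    rw [hlog, log_div (hQ x).ne' (h1 x).ne', log_div (hQ x).ne' (h2 x).ne']
    ring
  simp only [kl, hterm, Finset.sum_add_distrib, ← Finset.mul_sum, ← Finset.sum_mul, hQs,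
    one_mul]

end KL

section Chernoff

variable {P₁ P₂ Q : 𝒳 → ℝ}

lemma kl_tilt_combination_le (h1 : ∀ x, 0 < P₁ x) (h2 : ∀ x, 0 < P₂ x)
    (hQ : ∀ x, 0 < Q x) (hQs : ∑ x, Q x = 1) (μ : ℝ) :
    (1 - μ) * kl (tilt P₁ P₂ μ) P₁ + μ * kl (tilt P₁ P₂ μ) P₂ ≤
      (1 - μ) * kl Q P₁ + μ * kl Q P₂ := by
  have hself := kl_tilt h1 h2 (tilt_pos h1 h2 μ) (sum_tilt h1 h2 μ) μ
  have hQμ := kl_tilt h1 h2 hQ hQs μ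
  have hgibbs : 0 ≤ kl Q (tilt P₁ P₂ μ) :=
    kl_nonneg hQ (tilt_pos h1 h2 μ) (by rw [sum_tilt h1 h2, hQs])
  rw [kl_self] at hself
  linarith

lemma kl_tilt_left_le_of_kl_right_lt (h1 : ∀ x, 0 < P₁ x) (h2 : ∀ x, 0 < P₂ x)
    (hQ : ∀ x, 0 < Q x) (hQs : ∑ x, Q x = 1) {μ : ℝ} (hμ : μ ∈ Set.Icc (0 : ℝ) 1)
    (hlt : kl Q P₂ < kl (tilt P₁ P₂ μ) P₂) :
    kl (tilt P₁ P₂ μ) P₁ ≤ kl Q P₁ := by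
  have hcomb := kl_tilt_combination_le h1 h2 hQ hQs μ
  rcases hμ.2.lt_or_eq with hμ1 | rfl
  · have hright : μ * kl Q P₂ ≤ μ * kl (tilt P₁ P₂ μ) P₂ :=
      mul_le_mul_of_nonneg_left hlt.le hμ.1
    exact le_of_mul_le_mul_left (by linarith) (sub_pos.mpr hμ1)
  · linarith

lemma E1exp_le (h1 : ∀ x, 0 < P₁ x) (h2 : ∀ x, 0 < P₂ x)
    (hQ : ∀ x, 0 < Q x) (hQs : ∑ x, Q x = 1) (hQ1 : 0 ≤ kl Q P₁) {γ : ℝ}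
    (hγ : kl Q P₂ < γ) : E1exp P₁ P₂ γ ≤ kl Q P₁ := by
  refine Real.sSup_le ?_ hQ1
  rintro E ⟨μ, hμ, hγμ, rfl⟩
  exact kl_tilt_left_le_of_kl_right_lt h1 h2 hQ hQs hμ (hγ.trans_le hγμ)

lemma E2exp_eq_E1exp_swap (P₁ P₂ : 𝒳 → ℝ) (γ : ℝ) : E2exp P₁ P₂ γ = E1exp P₂ P₁ γ := by
  have hflip : ∀ {l : ℝ}, l ∈ Set.Icc (0 : ℝ) 1 → 1 - l ∈ Set.Icc (0 : ℝ) 1 :=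
    fun hl => ⟨sub_nonneg.mpr hl.2, sub_le_self _ hl.1⟩
  refine congrArg sSup (Set.ext fun E => ⟨?_, ?_⟩) <;> rintro ⟨l, hl, hγl, rfl⟩ <;>
    exact ⟨1 - l, hflip hl, by rwa [tilt_swap], by rw [tilt_swap]⟩

end Chernoff

theorem box_subset_RFD_of_gamma_gt_chernoff_general (P₁ P₂ : 𝒳 → ℝ)
    (h1pos : ∀ x, 0 < P₁ x) (h2pos : ∀ x, 0 < P₂ x)
    (h1sum : ∑ x, P₁ x = 1)
    (ls : ℝ) (hls : ls ∈ Set.Icc (0:ℝ) 1)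
    (hchern : kl (tilt P₁ P₂ ls) P₁ = kl (tilt P₁ P₂ ls) P₂)
    (γ : ℝ) (hγ : kl (tilt P₁ P₂ ls) P₁ < γ) :
    Set.Icc 0 (E1exp P₁ P₂ γ) ×ˢ Set.Icc 0 (E2exp P₁ P₂ γ) ⊆ RFD P₁ P₂ := by
  rintro ⟨e₁, e₂⟩ ⟨⟨he₁, he₁E⟩, ⟨he₂, he₂E⟩⟩
  have hQ := tilt_pos h1pos h2pos ls
  have hQs := sum_tilt h1pos h2pos ls
  have hD : 0 ≤ kl (tilt P₁ P₂ ls) P₁ := kl_nonneg hQ h1pos (by rw [h1sum, hQs])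
  have hE₁ : E1exp P₁ P₂ γ ≤ kl (tilt P₁ P₂ ls) P₁ :=
    E1exp_le h1pos h2pos hQ hQs hD (hchern ▸ hγ)
  have hE₂ : E2exp P₁ P₂ γ ≤ kl (tilt P₁ P₂ ls) P₂ := by
    rw [E2exp_eq_E1exp_swap]
    exact E1exp_le h2pos h1pos hQ hQs (hchern ▸ hD) (hchern ▸ hγ)
  exact ⟨he₁, he₂, ls, hls, he₁E.trans hE₁, he₂E.trans hE₂⟩

/-- If `γ > D*` then `[0,E₁(γ)] × [0,E₂(γ)] ⊆ R_FD`. -/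
theorem box_subset_RFD_of_gamma_gt_chernoff (P₁ P₂ : 𝒳 → ℝ)
    (h1pos : ∀ x, 0 < P₁ x) (h2pos : ∀ x, 0 < P₂ x)
    (h1sum : ∑ x, P₁ x = 1) (h2sum : ∑ x, P₂ x = 1)
    (hne : P₁ ≠ P₂)
    (ls : ℝ) (hls : ls ∈ Set.Icc (0:ℝ) 1)
    (hchern : kl (tilt P₁ P₂ ls) P₁ = kl (tilt P₁ P₂ ls) P₂)
    (γ : ℝ) (hγ : kl (tilt P₁ P₂ ls) P₁ < γ) :
    Set.Icc 0 (E1exp P₁ P₂ γ) ×ˢ Set.Icc 0 (E2exp P₁ P₂ γ) ⊆ RFD P₁ P₂ :=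
  box_subset_RFD_of_gamma_gt_chernoff_general P₁ P₂ h1pos h2pos h1sum ls hls hchern γ hγ
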